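/- Let I = (𝒳, 𝒞) be an instance of 23SAT containing a bad pair: clauses c₁, c₂ and literals l₁, l₂ with {l₁, l₂} ⊆ c₁ and {¬l₁, ¬l₂} ⊆ c₂, where both l₁ and ¬l₁ are minor literals. Then I is satisfiable if and only if the instance obtained from I by deleting the clauses c₁ and c₂ is satisfiable. -/

import Mathlib

/-- A literal: a variable together with a polarity. -/
structure Lit (α : Type*) where
  var : α
  pos : Bool
deriving DecidableEq

/-- The negation of a literal. -/
def Lit.neg {α : Type*} (l : Lit α) : Lit α := ⟨l.var, !l.pos⟩

/-- Evaluation of a literal under a truth assignment. -/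
def Lit.eval {α : Type*} (t : α → Bool) (l : Lit α) : Bool :=
  if l.pos then t l.var else !(t l.var)

/-- A truth assignment satisfies a clause if it contains a true literal. -/
def SatisfiesClause {α : Type*} (t : α → Bool) (c : Finset (Lit α)) : Prop :=
  ∃ l ∈ c, Lit.eval t l = true

/-- A set of clauses is satisfiable. -/
def SatInstance {α : Type*} (𝒞 : Finset (Finset (Lit α))) : Prop :=
  ∃ t : α → Bool, ∀ c ∈ 𝒞, SatisfiesClause t c

/-- A literal is major if it occurs in at least two clauses of `𝒞`. -/
def MajorLit {α : Type*} [DecidableEq α] (𝒞 : Finset (Finset (Lit α))) (l : Lit α) : Prop :=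
  2 ≤ (𝒞.filter (fun c => l ∈ c)).card

/-- A literal is minor if it occurs in exactly one clause of `𝒞`. -/
def MinorLit {α : Type*} [DecidableEq α] (𝒞 : Finset (Finset (Lit α))) (l : Lit α) : Prop :=
  (𝒞.filter (fun c => l ∈ c)).card = 1

/-!
Take an assignment `t` satisfying all clauses but `c₁, c₂` and reassign the variable of `l₁` so
that `l₁` gets the value `¬ t(l₂)`. Since `l₁` and `¬l₁` are minor, no other clause mentions this
variable, and `c₁ ⊇ {l₁, l₂}`, `c₂ ⊇ {¬l₁, ¬l₂}` are both satisfied because exactly one of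
`l₁, l₂` is true.
-/

open Function

namespace Lit

variable {α : Type*}

@[simp]
theorem eval_neg (t : α → Bool) (l : Lit α) : l.neg.eval t = !l.eval t := by
  cases l with
  | mk x p => cases p <;> simp [eval, neg]

theorem eq_or_eq_neg_of_var_eq {l l' : Lit α} (h : l.var = l'.var) : l = l' ∨ l = l'.neg := by
  obtain ⟨x, p⟩ := l
  obtain ⟨y, q⟩ := l'
  cases p <;> cases q <;> simp_all [neg]

variable [DecidableEq α]

theorem eval_update_of_var_ne (t : α → Bool) {l : Lit α} {x : α} (h : l.var ≠ x) (b : Bool) :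
    l.eval (update t x b) = l.eval t := by
  simp [eval, update_of_ne h]

theorem exists_eval_update_eq (t : α → Bool) (l : Lit α) (b : Bool) :
    ∃ v, l.eval (update t l.var v) = b :=
  ⟨if l.pos then b else !b, by cases h : l.pos <;> simp [eval, h]⟩

end Lit

section

variable {α : Type*}

theorem SatisfiesClause.update_of_forall_var_ne [DecidableEq α] {t : α → Bool}
    {c : Finset (Lit α)} (ht : SatisfiesClause t c) {x : α} (hc : ∀ l ∈ c, l.var ≠ x)
    (b : Bool) : SatisfiesClause (update t x b) c := by
  obtain ⟨l, hl, hlt⟩ := ht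
  exact ⟨l, hl, by rwa [Lit.eval_update_of_var_ne t (hc l hl)]⟩

theorem SatInstance.mono {𝒞 𝒟 : Finset (Finset (Lit α))} (h𝒟 : 𝒟 ⊆ 𝒞) (h : SatInstance 𝒞) :
    SatInstance 𝒟 :=
  let ⟨t, ht⟩ := h
  ⟨t, fun c hc => ht c (h𝒟 hc)⟩

theorem MinorLit.eq_of_mem [DecidableEq α] {𝒞 : Finset (Finset (Lit α))} {l : Lit α}
    (hl : MinorLit 𝒞 l) {c c' : Finset (Lit α)} (hc : c ∈ 𝒞) (hlc : l ∈ c) (hc' : c' ∈ 𝒞)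
    (hlc' : l ∈ c') : c = c' :=
  Finset.card_le_one.mp hl.le c (Finset.mem_filter.mpr ⟨hc, hlc⟩) c'
    (Finset.mem_filter.mpr ⟨hc', hlc'⟩)

theorem var_ne_of_minor_of_mem_sdiff [DecidableEq α] {𝒞 : Finset (Finset (Lit α))}
    {c₁ c₂ c : Finset (Lit α)} {l₁ : Lit α} (hc₁ : c₁ ∈ 𝒞) (hc₂ : c₂ ∈ 𝒞)
    (h₁ : l₁ ∈ c₁) (h₃ : l₁.neg ∈ c₂) (hm₁ : MinorLit 𝒞 l₁) (hm₂ : MinorLit 𝒞 l₁.neg)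
    (hc : c ∈ 𝒞 \ {c₁, c₂}) : ∀ l ∈ c, l.var ≠ l₁.var := by
  obtain ⟨hc𝒞, hc₁₂⟩ := Finset.mem_sdiff.mp hc
  simp only [Finset.mem_insert, Finset.mem_singleton, not_or] at hc₁₂
  intro l hl hvar
  rcases Lit.eq_or_eq_neg_of_var_eq hvar with rfl | rfl
  · exact hc₁₂.1 (hm₁.eq_of_mem hc𝒞 hl hc₁ h₁)
  · exact hc₁₂.2 (hm₂.eq_of_mem hc𝒞 hl hc₂ h₃)

end

theorem delete_bad_pair_minor_case_general {α : Type*} [DecidableEq α]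
    (𝒞 : Finset (Finset (Lit α)))
    (hcons : ∀ c ∈ 𝒞, ∀ l ∈ c, l.neg ∉ c)
    (c₁ c₂ : Finset (Lit α)) (hc₁ : c₁ ∈ 𝒞) (hc₂ : c₂ ∈ 𝒞)
    (l₁ l₂ : Lit α) (hll : l₁ ≠ l₂)
    (h₁ : l₁ ∈ c₁) (h₂ : l₂ ∈ c₁) (h₃ : l₁.neg ∈ c₂) (h₄ : l₂.neg ∈ c₂)
    (hm₁ : MinorLit 𝒞 l₁) (hm₂ : MinorLit 𝒞 l₁.neg) :
    SatInstance 𝒞 ↔ SatInstance (𝒞 \ {c₁, c₂}) := by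
  refine ⟨SatInstance.mono Finset.sdiff_subset, fun ⟨t, ht⟩ => ?_⟩
  have hvar : l₂.var ≠ l₁.var := fun h => by
    rcases Lit.eq_or_eq_neg_of_var_eq h with rfl | rfl
    · exact hll rfl
    · exact hcons c₁ hc₁ l₁ h₁ h₂
  obtain ⟨v, hv⟩ := Lit.exists_eval_update_eq t l₁ (!l₂.eval t)
  have hl₂ : l₂.eval (update t l₁.var v) = l₂.eval t := Lit.eval_update_of_var_ne t hvar v
  refine ⟨update t l₁.var v, fun c hc => ?_⟩
  by_cases hc₁₂ : c = c₁ ∨ c = c₂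
  · rcases hc₁₂ with rfl | rfl <;> cases h : l₂.eval t
    · exact ⟨_, h₁, by simp [hv, h]⟩
    · exact ⟨_, h₂, by simp [hl₂, h]⟩
    · exact ⟨_, h₄, by simp [hl₂, h]⟩
    · exact ⟨_, h₃, by simp [hv, h]⟩
  · have hc' : c ∈ 𝒞 \ {c₁, c₂} := Finset.mem_sdiff.mpr ⟨hc, by simpa using hc₁₂⟩
    exact (ht c hc').update_of_forall_var_ne
      (var_ne_of_minor_of_mem_sdiff hc₁ hc₂ h₁ h₃ hm₁ hm₂ hc') v

theorem delete_bad_pair_minor_case {α : Type*} [DecidableEq α]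
    (𝒞 : Finset (Finset (Lit α)))
    (hsize : ∀ c ∈ 𝒞, c.card = 2 ∨ c.card = 3)
    (hcons : ∀ c ∈ 𝒞, ∀ l ∈ c, l.neg ∉ c)
    (hmaj : ∀ c ∈ 𝒞, ∀ l₁ ∈ c, ∀ l₂ ∈ c, MajorLit 𝒞 l₁ → MajorLit 𝒞 l₂ → l₁ = l₂)
    (c₁ c₂ : Finset (Lit α)) (hc₁ : c₁ ∈ 𝒞) (hc₂ : c₂ ∈ 𝒞) (hcc : c₁ ≠ c₂)
    (l₁ l₂ : Lit α) (hll : l₁ ≠ l₂)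
    (h₁ : l₁ ∈ c₁) (h₂ : l₂ ∈ c₁) (h₃ : l₁.neg ∈ c₂) (h₄ : l₂.neg ∈ c₂)
    (hm₁ : MinorLit 𝒞 l₁) (hm₂ : MinorLit 𝒞 l₁.neg) :
    SatInstance 𝒞 ↔ SatInstance (𝒞 \ {c₁, c₂}) :=
  delete_bad_pair_minor_case_general 𝒞 hcons c₁ c₂ hc₁ hc₂ l₁ l₂ hll h₁ h₂ h₃ h₄ hm₁ hm₂
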